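/- A min-plus polynomial p(x) = x^n ⊕ c_1 ⊗ x^{n-1} ⊕ ⋯ ⊕ c_{n-1} ⊗ x ⊕ c_n, viewed as the real function p(x) = min(nx, c_1 + (n-1)x, ..., c_{n-1} + x, c_n), factors completely into linear factors p(x) = (x ⊕ c_1) ⊗ (x ⊕ (c_2 − c_1)) ⊗ ⋯ ⊗ (x ⊕ (c_n − c_{n-1})) (equality as functions on ℝ) if and only if c_1 ≤ c_2 − c_1 ≤ ⋯ ≤ c_n − c_{n-1}. -/
import Mathlib


open Finset

/-- A min-plus polynomial `p(x) = xⁿ ⊕ c₁⊗xⁿ⁻¹ ⊕ ⋯ ⊕ cₙ`, viewed as the real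
function `p(x) = min_k (c_k + (n-k)x)` (with `c₀ = 0`), factors completely into
linear factors `(x ⊕ c₁) ⊗ (x ⊕ (c₂-c₁)) ⊗ ⋯ ⊗ (x ⊕ (cₙ-cₙ₋₁))`, i.e. equals
`∑ᵢ min(x, c_{i+1}-c_i)` as a function on ℝ, if and only if
`c₁ ≤ c₂-c₁ ≤ ⋯ ≤ cₙ-cₙ₋₁`. -/
theorem minplus_linear_factorization_iff (n : ℕ) (hn : 1 ≤ n) (c : ℕ → ℝ)
    (hc0 : c 0 = 0) :
    (∀ x : ℝ,
        (range (n + 1)).inf' (by simp) (fun k => c k + ((n - k : ℕ) : ℝ) * x)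
          = ∑ i ∈ range n, min x (c (i + 1) - c i))
      ↔ (∀ i, i + 2 ≤ n → c (i + 1) - c i ≤ c (i + 2) - c (i + 1)) := by
  classical
  set d : ℕ → ℝ := fun i => c (i + 1) - c i with hdd
  have hck : ∀ k, c k = ∑ i ∈ range k, d i := by
    intro k
    rw [hdd, Finset.sum_range_sub, hc0, sub_zero]
  have key : ∀ (x : ℝ) (k : ℕ), k ≤ n →
      c k + ((n - k : ℕ) : ℝ) * x = ∑ i ∈ range n, (if i < k then d i else x) := by
    intro x k hk
    rw [← Finset.sum_range_add_sum_Ico _ hk]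
    have h1 : ∑ i ∈ range k, (if i < k then d i else x) = c k := by
      rw [hck]
      exact Finset.sum_congr rfl (fun i hi => if_pos (mem_range.mp hi))
    have h2 : ∑ i ∈ Ico k n, (if i < k then d i else x) = ((n - k : ℕ) : ℝ) * x := by
      rw [Finset.sum_congr rfl
        (fun i hi => if_neg (not_lt.mpr (Finset.mem_Ico.mp hi).1)),
        Finset.sum_const, Nat.card_Ico, nsmul_eq_mul]
    rw [h1, h2]
  have term_le : ∀ (x : ℝ) (k i : ℕ), min x (d i) ≤ (if i < k then d i else x) := by
    intro x k i
    split_ifs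
    · exact min_le_right _ _
    · exact min_le_left _ _
  constructor
  · intro H
    by_contra hcon
    push_neg at hcon
    obtain ⟨i, hin, hlt⟩ := hcon
    set x : ℝ := (c (i + 2) - c (i + 1) + (c (i + 1) - c i)) / 2 with hx
    have hx1 : d (i + 1) < x := by rw [hdd]; simp only; linarith
    have hx2 : x < d i := by rw [hdd]; simp only; linarith
    have hlt' : (∑ j ∈ range n, min x (d j))
        < (range (n + 1)).inf' (by simp) (fun k => c k + ((n - k : ℕ) : ℝ) * x) := by
      rw [Finset.lt_inf'_iff]
      intro k hk
      have hk' : k ≤ n := Nat.lt_succ_iff.mp (mem_range.mp hk)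
      rw [key x k hk']
      apply Finset.sum_lt_sum (fun j _ => term_le x k j)
      by_cases hki : k ≤ i + 1
      · refine ⟨i + 1, mem_range.mpr (by omega), ?_⟩
        rw [if_neg (by omega), min_eq_right hx1.le]
        exact hx1
      · refine ⟨i, mem_range.mpr (by omega), ?_⟩
        rw [if_pos (by omega), min_eq_left hx2.le]
        exact hx2
    rw [H x] at hlt'
    exact lt_irrefl _ hlt'
  · intro hmono'
    have hmono : ∀ i j, i ≤ j → j < n → d i ≤ d j := by
      intro i j hij hjn
      induction j with
      | zero => obtain rfl : i = 0 := Nat.le_zero.mp hij; exact le_refl _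
      | succ m ih =>
        rcases Nat.lt_succ_iff_lt_or_eq.mp (Nat.lt_succ_of_le hij) with h | h
        · exact le_trans (ih (by omega) (by omega)) (hmono' m (by omega))
        · subst h; rfl
    intro x
    apply le_antisymm
    · -- inf' ≤ sum : find the right k
      by_cases h : ∃ j, j < n ∧ x ≤ d j
      · set k := Nat.find h with hkdef
        obtain ⟨hkn, hkx⟩ := Nat.find_spec h
        have hsplit : ∀ i, i < n → min x (d i) = (if i < k then d i else x) := by
          intro i hi
          split_ifs with hik
          · have : ¬ (i < n ∧ x ≤ d i) := Nat.find_min h hik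
            push_neg at this
            exact min_eq_right (this hi).le
          · exact min_eq_left (le_trans hkx (hmono k i (not_lt.mp hik) hi))
        have : (∑ j ∈ range n, min x (d j)) = c k + ((n - k : ℕ) : ℝ) * x := by
          rw [key x k hkn.le]
          exact Finset.sum_congr rfl (fun i hi => hsplit i (mem_range.mp hi))
        rw [this]
        exact Finset.inf'_le _ (mem_range.mpr (by omega))
      · push_neg at h
        have : (∑ j ∈ range n, min x (d j)) = c n + ((n - n : ℕ) : ℝ) * x := by
          rw [key x n le_rfl]
          refine Finset.sum_congr rfl (fun i hi => ?_)
          rw [if_pos (mem_range.mp hi)]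
          exact min_eq_right (h i (mem_range.mp hi)).le
        rw [this]
        exact Finset.inf'_le _ (mem_range.mpr (by omega))
    · apply Finset.le_inf'
      intro k hk
      rw [key x k (Nat.lt_succ_iff.mp (mem_range.mp hk))]
      exact Finset.sum_le_sum (fun j _ => term_le x k j)
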